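/- arXiv:2402.10309 — 4 statements merged into one kernel-verified Lean document; each statement's English description precedes it below -/
import Mathlib

section
/- If Q and V satisfy the soft Bellman optimality equations, then for every complete trajectory τ = (s_0, s_1, …, s_T, s_f): ∏_{t=0}^{T} π*(s_{t+1}|s_t) = exp((Σ_{t=0}^{T} r(s_t, s_{t+1}) − V(s_0))/α). In particular, the probability that the optimal policy generates a complete trajectory τ is proportional to exp(Σ_{t=0}^{T} r(s_t, s_{t+1})/α). -/
/-!
Under the optimal policy, `log π*(s'|s) = (Q(s,s') - V(s))/α = (r(s,s') + V(s') - V(s))/α` by the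
first Bellman equation, so along a trajectory the log-probabilities telescope to
`(Σ_t r(s_t,s_{t+1}) + V(s_f) - V(s₀))/α`, and `V(s_f) = 0`.
-/

/-- Product of `f` over consecutive pairs of a list:
for `l = [v₀, …, v_k]`, `pairProd f l = ∏_{t=0}^{k-1} f v_t v_{t+1}`. -/
def pairProd {V : Type*} (f : V → V → ℝ) (l : List V) : ℝ :=
  ((l.zip l.tail).map (fun p => f p.1 p.2)).prod

/-- Sum of `f` over consecutive pairs of a list. -/
def pairSum {V : Type*} (f : V → V → ℝ) (l : List V) : ℝ :=
  ((l.zip l.tail).map (fun p => f p.1 p.2)).sum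

/-- `l` is a directed path from `a` to `b` in the graph with edge relation `E`. -/
def IsPath {V : Type*} (E : V → V → Prop) (a b : V) (l : List V) : Prop :=
  l.Chain' E ∧ l.head? = some a ∧ l.getLast? = some b

section PairSum

variable {V : Type*}

@[simp]
theorem pairSum_cons_cons (f : V → V → ℝ) (a b : V) (l : List V) :
    pairSum f (a :: b :: l) = f a b + pairSum f (b :: l) := by
  simp [pairSum]

theorem pairProd_exp (f : V → V → ℝ) (l : List V) :
    pairProd (fun s s' => Real.exp (f s s')) l = Real.exp (pairSum f l) := by
  simp [pairProd, pairSum, Real.exp_list_sum, Function.comp_def]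

theorem pairSum_add (f g : V → V → ℝ) (l : List V) :
    pairSum (fun s s' => f s s' + g s s') l = pairSum f l + pairSum g l := by
  simp [pairSum, List.sum_map_add]

theorem pairSum_div (f : V → V → ℝ) (c : ℝ) (l : List V) :
    pairSum (fun s s' => f s s' / c) l = pairSum f l / c := by
  simp [pairSum, div_eq_mul_inv, List.sum_map_mul_right]

theorem pairSum_congr_of_isChain {E : V → V → Prop} {f g : V → V → ℝ} {l : List V}
    (hl : l.IsChain E) (hfg : ∀ s s', E s s' → f s s' = g s s') :
    pairSum f l = pairSum g l := by
  induction hl with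
  | nil | singleton => rfl
  | cons_cons hab _ ih => rw [pairSum_cons_cons, pairSum_cons_cons, hfg _ _ hab, ih]

theorem pairSum_sub_telescope (φ : V → ℝ) {l : List V} {a b : V}
    (ha : l.head? = some a) (hb : l.getLast? = some b) :
    pairSum (fun s s' => φ s' - φ s) l = φ b - φ a := by
  induction l generalizing a with
  | nil => simp at ha
  | cons x tl ih =>
    obtain rfl : x = a := by simpa using ha
    cases tl with
    | nil =>
      obtain rfl : x = b := by simpa using hb
      simp [pairSum]
    | cons c rest =>
      rw [List.getLast?_cons_cons] at hb
      rw [pairSum_cons_cons, ih rfl hb]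
      ring

end PairSum

theorem optimal_policy_trajectory_probability_general
    {V : Type*}
    (E : V → V → Prop) (s0 sf : V)
    (α : ℝ)
    (r : V → V → ℝ)
    (Q : V → V → ℝ) (Vf : V → ℝ)
    (hQ : ∀ s s' : V, E s s' → Q s s' = r s s' + Vf s')
    (hVsf : Vf sf = 0) :
    ∀ l : List V, IsPath E s0 sf l →
      pairProd (fun s s' => Real.exp ((Q s s' - Vf s) / α)) l
        = Real.exp ((pairSum r l - Vf s0) / α) := by
  rintro l ⟨hchain, hhead, hlast⟩
  have hlog : pairSum (fun s s' => Q s s' - Vf s) l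
      = pairSum (fun s s' => r s s' + (Vf s' - Vf s)) l :=
    pairSum_congr_of_isChain hchain fun s s' hss' => by rw [hQ s s' hss']; ring
  rw [pairProd_exp, pairSum_div, hlog, pairSum_add,
    pairSum_sub_telescope Vf hhead hlast, hVsf]
  congr 1
  ring

/-- If `Q` and `V` satisfy the soft Bellman optimality equations, then for
every complete trajectory `τ = (s₀, …, s_T, s_f)` the probability of `τ` under the optimal
policy `π*(s'|s) = exp((Q(s,s') - V(s))/α)` equals `exp((Σ_t r(s_t,s_{t+1}) - V(s₀))/α)`;
in particular it is proportional to the exponentiated return. -/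
theorem optimal_policy_trajectory_probability
    {V : Type*} [Fintype V] [DecidableEq V]
    (E : V → V → Prop) [DecidableRel E] (s0 sf : V)
    (hacyc : ∀ v : V, ¬ Relation.TransGen E v v)
    (hsink : ∀ v : V, ¬ E sf v)
    (hreach : ∀ v : V, Relation.ReflTransGen E s0 v)
    (hnoin : ∀ v : V, ¬ E v s0)
    (hs0f : s0 ≠ sf)
    (α : ℝ) (hα : 0 < α)
    (r : V → V → ℝ)
    (Q : V → V → ℝ) (Vf : V → ℝ)
    (hQ : ∀ s s' : V, E s s' → Q s s' = r s s' + Vf s')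
    (hV : ∀ s : V, s ≠ sf →
      Vf s = α * Real.log (∑ t ∈ Finset.univ.filter (fun t => E s t), Real.exp (Q s t / α)))
    (hVsf : Vf sf = 0) :
    ∀ l : List V, IsPath E s0 sf l →
      pairProd (fun s s' => Real.exp ((Q s s' - Vf s) / α)) l
        = Real.exp ((pairSum r l - Vf s0) / α) :=
  optimal_policy_trajectory_probability_general E s0 sf α r Q Vf hQ hVsf
end

section
/- Let π_b be a probability distribution over the (finite) set of partial trajectories of the soft MDP, and define the losses L_PCL = (1/2) Σ_τ π_b(τ) Δ_PCL(τ)² and L_SubTB = (1/2) Σ_τ π_b(τ) Δ_SubTB(τ)². Then, on the soft MDP with the sparse corrected reward and under the identifications π_θ(s'|s) = P_F(s'|s) and V(s) = α log F(s), the Path Consistency Learning objective is proportional to the Subtrajectory Balance objective: L_PCL = α² L_SubTB. -/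
/-- The PCL residual of a partial trajectory `l`, with value function
`V(s) = α log F(s)` for `s ≠ s_f` and `V(s_f) = 0`:
`Δ_PCL(τ) = -V(s_m) + V(s_n) + Σ_t (r(s_t,s_{t+1}) - α log π_θ(s_{t+1}|s_t))`. -/
noncomputable def deltaPCL {V : Type*} [DecidableEq V] (sf : V) (α : ℝ)
    (F : V → ℝ) (PF : V → V → ℝ) (r : V → V → ℝ) (l : List V) : ℝ :=
  -(if l.head?.getD sf = sf then 0 else α * Real.log (F (l.head?.getD sf)))
    + (if l.getLast?.getD sf = sf then 0 else α * Real.log (F (l.getLast?.getD sf)))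
    + pairSum (fun s s' => r s s' - α * Real.log (PF s s')) l

/-- The SubTB residual of a partial trajectory `l`: if `l` ends at `s_f`, the boundary form
`log(exp(-E(s_{n-1})/α) ∏_{t≤n-2} P_B) - log(F(s_m) ∏_{t≤n-1} P_F)`; otherwise
`log(F(s_n) ∏ P_B) - log(F(s_m) ∏ P_F)`. -/
noncomputable def deltaSubTB {V : Type*} [DecidableEq V] (sf : V) (α : ℝ)
    (En : V → ℝ) (F : V → ℝ) (PF PB : V → V → ℝ) (l : List V) : ℝ :=
  if l.getLast? = some sf then
    Real.log (Real.exp (-En (l.dropLast.getLast?.getD sf) / α) * pairProd PB l.dropLast)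
      - Real.log (F (l.head?.getD sf) * pairProd PF l)
  else
    Real.log (F (l.getLast?.getD sf) * pairProd PB l)
      - Real.log (F (l.head?.getD sf) * pairProd PF l)

section Aux
variable {V : Type*}

lemma log_list_prod : ∀ (L : List ℝ), (∀ x ∈ L, 0 < x) →
    Real.log L.prod = (L.map Real.log).sum
  | [], _ => by simp
  | a :: t, h => by
    simp only [List.prod_cons, List.map_cons, List.sum_cons]
    rw [Real.log_mul (ne_of_gt (h a (by simp)))
      (ne_of_gt (List.prod_pos fun x hx => h x (by simp [hx]))),
      log_list_prod t fun x hx => h x (by simp [hx])]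

lemma pairSum_cons₂ (f : V → V → ℝ) (a b : V) (t : List V) :
    pairSum f (a :: b :: t) = f a b + pairSum f (b :: t) := by
  simp [pairSum]

lemma pairProd_cons₂ (f : V → V → ℝ) (a b : V) (t : List V) :
    pairProd f (a :: b :: t) = f a b * pairProd f (b :: t) := by
  simp [pairProd]

lemma getLast_cons_cons (a c : V) (t : List V) (h : a :: c :: t ≠ []) :
    (a :: c :: t).getLast h = (c :: t).getLast (by simp) :=
  List.getLast_cons _

lemma pairSum_concat (f : V → V → ℝ) :
    ∀ (l : List V) (hl : l ≠ []) (b : V),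
      pairSum f (l ++ [b]) = pairSum f l + f (l.getLast hl) b
  | [a], _, b => by simp [pairSum]
  | a :: c :: t, h, b => by
    have ih := pairSum_concat f (c :: t) (by simp) b
    simp only [List.cons_append] at *
    rw [pairSum_cons₂, pairSum_cons₂, ih, getLast_cons_cons a c t h]
    ring

lemma pairProd_concat (f : V → V → ℝ) :
    ∀ (l : List V) (hl : l ≠ []) (b : V),
      pairProd f (l ++ [b]) = pairProd f l * f (l.getLast hl) b
  | [a], _, b => by simp [pairProd]
  | a :: c :: t, h, b => by
    have ih := pairProd_concat f (c :: t) (by simp) b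
    simp only [List.cons_append] at *
    rw [pairProd_cons₂, pairProd_cons₂, ih, getLast_cons_cons a c t h]
    ring

lemma pairProd_pos (f : V → V → ℝ) (l : List V)
    (h : ∀ p ∈ l.zip l.tail, 0 < f p.1 p.2) : 0 < pairProd f l :=
  List.prod_pos fun x hx => by
    obtain ⟨p, hp, rfl⟩ := List.mem_map.1 hx
    exact h p hp

lemma log_pairProd (f : V → V → ℝ) (l : List V)
    (h : ∀ p ∈ l.zip l.tail, 0 < f p.1 p.2) :
    Real.log (pairProd f l) = pairSum (fun a b => Real.log (f a b)) l := by
  unfold pairProd pairSum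
  rw [log_list_prod]
  · rw [List.map_map]; rfl
  · intro x hx
    obtain ⟨p, hp, rfl⟩ := List.mem_map.1 hx
    exact h p hp

lemma pairSum_sub (f g : V → V → ℝ) (l : List V) :
    pairSum (fun a b => f a b - g a b) l = pairSum f l - pairSum g l := by
  unfold pairSum
  induction (l.zip l.tail) with
  | nil => simp
  | cons p t ih => simp only [List.map_cons, List.sum_cons, ih]; ring

lemma pairSum_const_mul (c : ℝ) (f : V → V → ℝ) (l : List V) :
    pairSum (fun a b => c * f a b) l = c * pairSum f l := by
  unfold pairSum
  induction (l.zip l.tail) with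
  | nil => simp
  | cons p t ih => simp only [List.map_cons, List.sum_cons, ih]; ring

lemma pairSum_congr {f g : V → V → ℝ} {l : List V}
    (h : ∀ p ∈ l.zip l.tail, f p.1 p.2 = g p.1 p.2) :
    pairSum f l = pairSum g l := by
  unfold pairSum
  congr 1
  exact List.map_congr_left fun p hp => h p hp

lemma chain'_getLast_of_mem_sink {E : V → V → Prop} {sf : V}
    (hsink : ∀ v, ¬ E sf v) :
    ∀ (l : List V), l.Chain' E → sf ∈ l → l.getLast? = some sf
  | [a], _, hm => by simp_all
  | a :: c :: t, hc, hm => by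
    simp only [List.Chain', List.isChain_cons_cons] at hc
    have hne : a ≠ sf := fun h => hsink c (h ▸ hc.1)
    have hmem : sf ∈ c :: t := by
      rcases List.mem_cons.1 hm with h | h
      · exact absurd h.symm hne
      · exact h
    have := chain'_getLast_of_mem_sink hsink (c :: t) hc.2 hmem
    rwa [List.getLast?_cons_cons]

lemma chain'_pairs {E : V → V → Prop} :
    ∀ {l : List V}, l.Chain' E → ∀ p ∈ l.zip l.tail, E p.1 p.2
  | [], _, p, hp => by simp at hp
  | [a], _, p, hp => by simp at hp
  | a :: c :: t, hc, p, hp => by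
    simp only [List.Chain', List.isChain_cons_cons] at hc
    simp only [List.tail_cons, List.zip_cons_cons, List.mem_cons] at hp
    rcases hp with rfl | hp
    · exact hc.1
    · exact chain'_pairs hc.2 p hp

end Aux

lemma key {V : Type*} [DecidableEq V] {E : V → V → Prop} {sf : V}
    (hsink : ∀ v : V, ¬ E sf v)
    {α : ℝ} (hα : 0 < α) (En : V → ℝ)
    {PB : V → V → ℝ} (hPBpos : ∀ s s' : V, E s s' → s' ≠ sf → 0 < PB s s')
    {PF : V → V → ℝ} (hPFpos : ∀ s s' : V, E s s' → 0 < PF s s')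
    {F : V → ℝ} (hFpos : ∀ s : V, s ≠ sf → 0 < F s)
    {r : V → V → ℝ}
    (hr : ∀ s s' : V, E s s' → s' ≠ sf → r s s' = α * Real.log (PB s s'))
    (hrf : ∀ x : V, E x sf → r x sf = -En x)
    (l : List V) (hl : l ≠ []) (hc : l.Chain' E)
    (hlen : l.getLast? = some sf → 2 ≤ l.length) :
    deltaPCL sf α F PF r l = α * deltaSubTB sf α En F PF PB l := by
  have hα' : α ≠ 0 := hα.ne'
  by_cases hlast : l.getLast? = some sf
  · -- l = l' ++ [sf]
    rcases l.eq_nil_or_concat with rfl | ⟨l', b, rfl⟩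
    · exact absurd rfl hl
    rw [List.concat_eq_append] at hl hc hlen hlast ⊢
    have hb : b = sf := by
      rw [List.getLast?_concat] at hlast; exact Option.some.inj hlast
    rw [hb] at hl hc hlen hlast ⊢
    clear hb
    have hl' : l' ≠ [] := by
      intro h; subst h
      have := hlen hlast; simp at this
    have hcl' : l'.Chain' E := (List.isChain_append.1 hc).1
    have hnm : sf ∉ l' := by
      intro hm
      have h1 := chain'_getLast_of_mem_sink hsink l' hcl' hm
      exact hsink sf ((List.isChain_append.1 hc).2.2 sf h1 sf rfl)
    set x := l'.getLast hl' with hxdef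
    have hxlast? : l'.getLast? = some x := List.getLast?_eq_getLast hl'
    have hExsf : E x sf := (List.isChain_append.1 hc).2.2 x hxlast? sf rfl
    have hxne : x ≠ sf := fun h => hnm (h ▸ List.getLast_mem hl')
    have hpairs : ∀ p ∈ l'.zip l'.tail, E p.1 p.2 := chain'_pairs hcl'
    have hpne : ∀ p ∈ l'.zip l'.tail, p.2 ≠ sf := fun p hp h =>
      hnm (h ▸ List.mem_of_mem_tail (List.of_mem_zip hp).2)
    have hPBp : ∀ p ∈ l'.zip l'.tail, 0 < PB p.1 p.2 := fun p hp =>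
      hPBpos _ _ (hpairs p hp) (hpne p hp)
    have hPFp : ∀ p ∈ l'.zip l'.tail, 0 < PF p.1 p.2 := fun p hp =>
      hPFpos _ _ (hpairs p hp)
    have hhead? : (l' ++ [sf]).head? = some (l'.head hl') := by
      rw [List.head?_append_of_ne_nil _ hl', List.head?_eq_head]
    have hh := l'.head hl'
    have hhne : l'.head hl' ≠ sf := fun h => hnm (h ▸ List.head_mem hl')
    have hFh : 0 < F (l'.head hl') := hFpos _ hhne
    -- unfold both sides
    rw [deltaPCL, deltaSubTB, if_pos hlast, hhead?, List.getLast?_concat]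
    simp only [Option.getD_some, if_neg hhne, if_pos rfl, List.dropLast_concat,
      hxlast?, ↓reduceIte]
    rw [pairSum_concat _ l' hl' sf,
      pairSum_congr (g := fun a b => α * Real.log (PB a b) - α * Real.log (PF a b))
        (fun p hp => by rw [hr _ _ (hpairs p hp) (hpne p hp)]),
      pairSum_sub, pairSum_const_mul, pairSum_const_mul,
      hrf x hExsf,
      pairProd_concat _ l' hl' sf,
      Real.log_mul (Real.exp_pos _).ne' (pairProd_pos PB l' hPBp).ne',
      Real.log_exp,
      Real.log_mul hFh.ne'
        (mul_pos (pairProd_pos PF l' hPFp) (hPFpos _ _ hExsf)).ne',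
      Real.log_mul (pairProd_pos PF l' hPFp).ne' (hPFpos _ _ hExsf).ne',
      log_pairProd PB l' hPBp, log_pairProd PF l' hPFp]
    rw [← hxdef]
    field_simp
    ring
  · -- last ≠ sf : sf ∉ l
    have hnm : sf ∉ l := fun hm =>
      hlast (chain'_getLast_of_mem_sink hsink l hc hm)
    have hpairs : ∀ p ∈ l.zip l.tail, E p.1 p.2 := chain'_pairs hc
    have hp1ne : ∀ p ∈ l.zip l.tail, p.1 ≠ sf := fun p hp h =>
      hnm (h ▸ (List.of_mem_zip hp).1)
    have hp2ne : ∀ p ∈ l.zip l.tail, p.2 ≠ sf := fun p hp h =>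
      hnm (h ▸ List.mem_of_mem_tail (List.of_mem_zip hp).2)
    have hPBp : ∀ p ∈ l.zip l.tail, 0 < PB p.1 p.2 := fun p hp =>
      hPBpos _ _ (hpairs p hp) (hp2ne p hp)
    have hPFp : ∀ p ∈ l.zip l.tail, 0 < PF p.1 p.2 := fun p hp =>
      hPFpos _ _ (hpairs p hp)
    have hhead? : l.head? = some (l.head hl) := List.head?_eq_head hl
    have hlast? : l.getLast? = some (l.getLast hl) := List.getLast?_eq_getLast hl
    have hhne : l.head hl ≠ sf := fun h => hnm (h ▸ List.head_mem hl)
    have hlne : l.getLast hl ≠ sf := fun h => hnm (h ▸ List.getLast_mem hl)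
    have hFh : 0 < F (l.head hl) := hFpos _ hhne
    have hFl : 0 < F (l.getLast hl) := hFpos _ hlne
    rw [deltaPCL, deltaSubTB, if_neg hlast, hhead?, hlast?]
    simp only [Option.getD_some, if_neg hhne, if_neg hlne]
    rw [pairSum_congr (g := fun a b => α * Real.log (PB a b) - α * Real.log (PF a b))
        (fun p hp => by rw [hr _ _ (hpairs p hp) (hp2ne p hp)]),
      pairSum_sub, pairSum_const_mul, pairSum_const_mul,
      Real.log_mul hFl.ne' (pairProd_pos PB l hPBp).ne',
      Real.log_mul hFh.ne' (pairProd_pos PF l hPFp).ne',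
      log_pairProd PB l hPBp, log_pairProd PF l hPFp]
    ring


/-- On a soft MDP with the sparse corrected reward, for any probability
distribution `π_b` over the partial trajectories, the PCL objective is proportional to the
SubTB objective: `L_PCL = α² L_SubTB`, under `π_θ = P_F` and `V(s) = α log F(s)`. -/
theorem pcl_loss_eq_subtb_loss
    {V : Type*} [Fintype V] [DecidableEq V]
    (E : V → V → Prop) [DecidableRel E] (s0 sf : V)
    (hacyc : ∀ v : V, ¬ Relation.TransGen E v v)
    (hsink : ∀ v : V, ¬ E sf v)
    (hreach : ∀ v : V, Relation.ReflTransGen E s0 v)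
    (α : ℝ) (hα : 0 < α)
    (En : V → ℝ)
    (PB : V → V → ℝ)
    (hPBpos : ∀ s s' : V, E s s' → s' ≠ sf → 0 < PB s s')
    (hPBsum : ∀ s' : V, s' ≠ sf → s' ≠ s0 →
      ∑ s ∈ Finset.univ.filter (fun s => E s s'), PB s s' = 1)
    (PF : V → V → ℝ) (hPFpos : ∀ s s' : V, E s s' → 0 < PF s s')
    (F : V → ℝ) (hFpos : ∀ s : V, s ≠ sf → 0 < F s)
    (r : V → V → ℝ)
    (hr : ∀ s s' : V, E s s' → s' ≠ sf → r s s' = α * Real.log (PB s s'))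
    (hrf : ∀ x : V, E x sf → r x sf = -En x)
    -- π_b : a probability distribution over the partial trajectories of the soft MDP
    (πb : List V → ℝ)
    (hπb_nonneg : ∀ l : List V, 0 ≤ πb l)
    (hπb_supp : ∀ l : List V, πb l ≠ 0 →
      l ≠ [] ∧ l.Chain' E ∧ (l.getLast? = some sf → 2 ≤ l.length))
    (hπb_sum : ∑ᶠ l : List V, πb l = 1) :
    (1 / 2) * (∑ᶠ l : List V, πb l * (deltaPCL sf α F PF r l) ^ 2)
      = α ^ 2 * ((1 / 2) * ∑ᶠ l : List V, πb l * (deltaSubTB sf α En F PF PB l) ^ 2) := by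
  have hsupp : (Function.support πb).Finite := by
    by_contra h
    rw [finsum_of_infinite_support h] at hπb_sum
    exact one_ne_zero hπb_sum.symm
  have hpt : ∀ l : List V, πb l * (deltaPCL sf α F PF r l) ^ 2
      = α ^ 2 * (πb l * (deltaSubTB sf α En F PF PB l) ^ 2) := by
    intro l
    by_cases h : πb l = 0
    · simp [h]
    · obtain ⟨h1, h2, h3⟩ := hπb_supp l h
      rw [key hsink hα En hPBpos hPFpos hFpos hr hrf l h1 h2 h3]
      ring
  rw [finsum_congr hpt, ← mul_finsum _ _]
  ring
end

section
/- Let π_b be a probability distribution over the edges of G, and define the losses L_SQL = (1/2) Σ_{(s,s')} π_b(s, s') Δ_SQL(s, s')² and L_DB = (1/2) Σ_{(s,s')} π_b(s, s') Δ_DB(s, s')². Then, on the soft MDP with the sparse corrected reward and under the correspondence F(s) = Σ_{s'' ∈ Ch(s)} exp(Q(s, s'')/α) and P_F(s'|s) = exp(Q(s, s')/α)/F(s), the Soft Q-Learning objective is proportional to the Detailed Balance objective: L_SQL = α² L_DB. -/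
/-- The flow induced by a soft Q-function:
`F(s) = Σ_{s'' ∈ Ch(s)} exp(Q(s,s'')/α)`. -/
noncomputable def Fq {V : Type*} [Fintype V] (E : V → V → Prop) [DecidableRel E]
    (α : ℝ) (Q : V → V → ℝ) (s : V) : ℝ :=
  ∑ t ∈ Finset.univ.filter (fun t => E s t), Real.exp (Q s t / α)

/-- The policy induced by a soft Q-function:
`P_F(s'|s) = exp(Q(s,s')/α) / F(s)`. -/
noncomputable def PFq {V : Type*} [Fintype V] (E : V → V → Prop) [DecidableRel E]
    (α : ℝ) (Q : V → V → ℝ) (s s' : V) : ℝ :=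
  Real.exp (Q s s' / α) / Fq E α Q s

/-- The soft value function induced by a soft Q-function:
`V_Q(s) = α log Σ_{s'' ∈ Ch(s)} exp(Q(s,s'')/α)` for `s ∈ S`, and `V_Q(s_f) = 0`. -/
noncomputable def VQ {V : Type*} [Fintype V] [DecidableEq V]
    (E : V → V → Prop) [DecidableRel E] (sf : V) (α : ℝ) (Q : V → V → ℝ) (s : V) : ℝ :=
  if s = sf then 0 else α * Real.log (Fq E α Q s)

/-- The Detailed Balance residual under the correspondence `F = Fq`, `P_F = PFq`:
`Δ_DB(s,s') = log(F(s) P_F(s'|s)) - log(F(s') P_B(s|s'))` for `s' ∈ S`, and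
`Δ_DB(s,s_f) = log(F(s) P_F(s_f|s)) + E(s)/α` for terminal edges. -/
noncomputable def deltaDB {V : Type*} [Fintype V] [DecidableEq V]
    (E : V → V → Prop) [DecidableRel E] (sf : V) (α : ℝ)
    (En : V → ℝ) (PB : V → V → ℝ) (Q : V → V → ℝ) (s s' : V) : ℝ :=
  if s' = sf then
    Real.log (Fq E α Q s * PFq E α Q s s') + En s / α
  else
    Real.log (Fq E α Q s * PFq E α Q s s') - Real.log (Fq E α Q s' * PB s s')


lemma Fq_pos {V : Type*} [Fintype V] (E : V → V → Prop) [DecidableRel E]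
    (α : ℝ) (Q : V → V → ℝ) (s t : V) (h : E s t) : 0 < Fq E α Q s := by
  refine Finset.sum_pos (fun i _ => Real.exp_pos _) ⟨t, ?_⟩
  simp [h]

/-- On a soft MDP with the sparse corrected reward, for any probability
distribution `π_b` over the edges, the SQL objective is proportional to the DB objective:
`L_SQL = α² L_DB`, under `F(s) = Σ_{s''} exp(Q(s,s'')/α)`, `P_F(s'|s) = exp(Q(s,s')/α)/F(s)`. -/
theorem sql_loss_eq_db_loss
    {V : Type*} [Fintype V] [DecidableEq V]
    (E : V → V → Prop) [DecidableRel E] (s0 sf : V)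
    (hacyc : ∀ v : V, ¬ Relation.TransGen E v v)
    (hsink : ∀ v : V, ¬ E sf v)
    (hreach : ∀ v : V, Relation.ReflTransGen E s0 v)
    (hchild : ∀ s : V, s ≠ sf → ∃ t : V, E s t)
    (α : ℝ) (hα : 0 < α)
    (En : V → ℝ)
    (PB : V → V → ℝ)
    (hPBpos : ∀ s s' : V, E s s' → s' ≠ sf → 0 < PB s s')
    (hPBsum : ∀ s' : V, s' ≠ sf → s' ≠ s0 →
      ∑ s ∈ Finset.univ.filter (fun s => E s s'), PB s s' = 1)
    (r : V → V → ℝ)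
    (hr : ∀ s s' : V, E s s' → s' ≠ sf → r s s' = α * Real.log (PB s s'))
    (hrf : ∀ x : V, E x sf → r x sf = -En x)
    (Q : V → V → ℝ)
    -- π_b : a probability distribution over the edges of the graph
    (πb : V → V → ℝ)
    (hπb_nonneg : ∀ s s' : V, 0 ≤ πb s s')
    (hπb_supp : ∀ s s' : V, πb s s' ≠ 0 → E s s')
    (hπb_sum : ∑ s : V, ∑ s' : V, πb s s' = 1) :
    (1 / 2) * (∑ s : V, ∑ s' : V, πb s s' * (Q s s' - (r s s' + VQ E sf α Q s')) ^ 2)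
      = α ^ 2 * ((1 / 2) *
          ∑ s : V, ∑ s' : V, πb s s' * (deltaDB E sf α En PB Q s s') ^ 2) := by
  have hterm : ∀ s s' : V, πb s s' * (Q s s' - (r s s' + VQ E sf α Q s')) ^ 2
      = α ^ 2 * (πb s s' * (deltaDB E sf α En PB Q s s') ^ 2) := by
    intro s s'
    by_cases hz : πb s s' = 0
    · simp [hz]
    have hE : E s s' := hπb_supp s s' hz
    have hFs : 0 < Fq E α Q s := Fq_pos E α Q s s' hE
    have hlog1 : Real.log (Fq E α Q s * PFq E α Q s s') = Q s s' / α := by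
      unfold PFq
      rw [mul_comm, div_mul_cancel₀ _ (ne_of_gt hFs), Real.log_exp]
    have hkey : Q s s' - (r s s' + VQ E sf α Q s') = α * deltaDB E sf α En PB Q s s' := by
      by_cases hf : s' = sf
      · subst hf
        rw [hrf s hE]
        simp only [deltaDB, VQ, if_pos rfl, ↓reduceIte, hlog1]
        field_simp
        ring
      · obtain ⟨t, ht⟩ := hchild s' hf
        have hFs' : 0 < Fq E α Q s' := Fq_pos E α Q s' t ht
        have hPB : 0 < PB s s' := hPBpos s s' hE hf
        rw [hr s s' hE hf]
        simp only [deltaDB, if_neg hf, VQ, if_neg hf, hlog1,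
          Real.log_mul (ne_of_gt hFs') (ne_of_gt hPB)]
        field_simp
        ring
      
    rw [hkey, mul_pow]
    ring
  simp_rw [hterm, ← Finset.mul_sum]
  ring
end

section
/- Let the reward be the forward-looking corrected reward r(s, s') = −E(s → s') + α log P_B(s|s') for edges with s' ∈ S and r(s, s_f) = 0. Then for every edge s → s' with s' ∈ S, the Soft Q-Learning residual equals −α times the Forward-Looking Detailed Balance residual: Q(s, s') − (r(s, s') + V_Q(s')) = −α [log(F̃(s') P_B(s|s')) − log(F̃(s) P_F(s'|s)) − E(s → s')/α], where F̃(s) = Σ_{s'' ∈ Ch(s)} exp(Q(s, s'')/α) and P_F(s'|s) = exp(Q(s, s')/α)/F̃(s). -/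
section SoftQ

variable {V : Type*} [Fintype V] (E : V → V → Prop) [DecidableRel E] (α : ℝ) (Q : V → V → ℝ)

theorem Fq_pos_of_rel {s t : V} (hst : E s t) : 0 < Fq E α Q s :=
  Finset.sum_pos' (fun _ _ => (Real.exp_pos _).le)
    ⟨t, Finset.mem_filter.mpr ⟨Finset.mem_univ t, hst⟩, Real.exp_pos _⟩

theorem Fq_mul_PFq {s t : V} (hst : E s t) (s' : V) :
    Fq E α Q s * PFq E α Q s s' = Real.exp (Q s s' / α) :=
  mul_div_cancel₀ _ (Fq_pos_of_rel E α Q hst).ne'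

theorem VQ_of_ne [DecidableEq V] {sf s : V} (hs : s ≠ sf) :
    VQ E sf α Q s = α * Real.log (Fq E α Q s) :=
  if_neg hs

end SoftQ

theorem sql_residual_eq_fl_db_residual_general
    {V : Type*} [Fintype V] [DecidableEq V]
    (E : V → V → Prop) [DecidableRel E] (sf : V)
    (hchild : ∀ s : V, s ≠ sf → ∃ t : V, E s t)
    (α : ℝ) (hα : 0 < α)
    -- edge-energy function decomposing the energy along every complete trajectory
    (Ee : V → V → ℝ)
    (PB : V → V → ℝ)
    (hPBpos : ∀ s s' : V, E s s' → s' ≠ sf → 0 < PB s s')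
    -- forward-looking corrected reward
    (r : V → V → ℝ)
    (hr : ∀ s s' : V, E s s' → s' ≠ sf →
      r s s' = -Ee s s' + α * Real.log (PB s s'))
    (Q : V → V → ℝ) :
    ∀ s s' : V, E s s' → s' ≠ sf →
      Q s s' - (r s s' + VQ E sf α Q s')
        = -α * (Real.log (Fq E α Q s' * PB s s')
            - Real.log (Fq E α Q s * PFq E α Q s s')
            - Ee s s' / α) := by
  intro s s' hss' hs'
  -- `s'` has a child, so `Fq E α Q s' > 0` and the logarithm of the product splits.
  obtain ⟨t, hs't⟩ := hchild s' hs'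
  rw [hr s s' hss' hs', VQ_of_ne E α Q hs', Fq_mul_PFq E α Q hss', Real.log_exp,
    Real.log_mul (Fq_pos_of_rel E α Q hs't).ne' (hPBpos s s' hss' hs').ne']
  field_simp
  ring

/-- With the forward-looking corrected reward
`r(s,s') = -E(s → s') + α log P_B(s|s')` on edges with `s' ∈ S` and `r(s,s_f) = 0`, for
every edge `s → s'` with `s' ∈ S` the SQL residual equals `-α` times the Forward-Looking
DB residual, under `F̃(s) = Σ_{s''} exp(Q(s,s'')/α)`, `P_F(s'|s) = exp(Q(s,s')/α)/F̃(s)`. -/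
theorem sql_residual_eq_fl_db_residual
    {V : Type*} [Fintype V] [DecidableEq V]
    (E : V → V → Prop) [DecidableRel E] (s0 sf : V)
    (hacyc : ∀ v : V, ¬ Relation.TransGen E v v)
    (hsink : ∀ v : V, ¬ E sf v)
    (hreach : ∀ v : V, Relation.ReflTransGen E s0 v)
    (hchild : ∀ s : V, s ≠ sf → ∃ t : V, E s t)
    (α : ℝ) (hα : 0 < α)
    (En : V → ℝ)
    -- edge-energy function decomposing the energy along every complete trajectory
    (Ee : V → V → ℝ)
    (hEe : ∀ (x : V) (l : List V), E x sf → IsPath E s0 x l → pairSum Ee l = En x)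
    (PB : V → V → ℝ)
    (hPBpos : ∀ s s' : V, E s s' → s' ≠ sf → 0 < PB s s')
    (hPBsum : ∀ s' : V, s' ≠ sf → s' ≠ s0 →
      ∑ s ∈ Finset.univ.filter (fun s => E s s'), PB s s' = 1)
    -- forward-looking corrected reward
    (r : V → V → ℝ)
    (hr : ∀ s s' : V, E s s' → s' ≠ sf →
      r s s' = -Ee s s' + α * Real.log (PB s s'))
    (hrf : ∀ x : V, E x sf → r x sf = 0)
    (Q : V → V → ℝ) :
    ∀ s s' : V, E s s' → s' ≠ sf →
      Q s s' - (r s s' + VQ E sf α Q s')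
        = -α * (Real.log (Fq E α Q s' * PB s s')
            - Real.log (Fq E α Q s * PFq E α Q s s')
            - Ee s s' / α) :=
  sql_residual_eq_fl_db_residual_general E sf hchild α hα Ee PB hPBpos r hr Q
end
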